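/- Let t be a positive integer and let G be a graph on n vertices containing no subgraph isomorphic to B_t. Then Σ_{S ⊆ V(G), |S| = t, S good} d(S)·(d(S) − 1) ≥ Σ_{u ∈ V(G)} d(u)² − 2(4t−1)·e(G) − (t−1)·n². -/

import Mathlib

open SimpleGraph

/-- `F` is contained in `G` as a subgraph: there is an injective map preserving adjacency. -/
def ContainsCopy {α β : Type*} (F : SimpleGraph α) (G : SimpleGraph β) : Prop :=
  ∃ f : α → β, Function.Injective f ∧ ∀ ⦃a b : α⦄, F.Adj a b → G.Adj (f a) (f b)

/-- `Bgraph t = K₂ □ S_t`, the Cartesian product of an edge and a star with `t` edges. -/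
def Bgraph (t : ℕ) : SimpleGraph (Fin 2 × (Fin 1 ⊕ Fin t)) :=
  (⊤ : SimpleGraph (Fin 2)).boxProd (completeBipartiteGraph (Fin 1) (Fin t))

/-- The codegree of a set `S`: the number of common neighbors of all vertices of `S`. -/
noncomputable def codeg {V : Type*} (G : SimpleGraph V) (S : Finset V) : ℕ :=
  {v : V | ∀ u ∈ S, G.Adj u v}.ncard

/-!
Since `∑ d(u)²` counts the triples `(x, y, v)` with `v` a common neighbour of `x` and `y`, it
suffices to bound `d({x, y})` for `x ≠ y`. Fixing `t - 1` vertices of `W = N({x, y})` that lie in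
no bad `t`-subset of `W`, every other such vertex completes them to a distinct good `t`-subset of
`W`, and a good `t`-set `S` lies in `N({x, y})` for exactly `d(S)(d(S) - 1)` ordered pairs
`(x, y)`. The vertices lying in bad sets are few: for an edge `xu` of a `B_t`-free graph, `u` lies
in a bad `t`-subset of `N({x, y})` for at most `3(t - 1)` vertices `y ≠ x`, since otherwise these
bad sets yield `t` four-cycles through `xu` that form a copy of `B_t`.
-/

open Finset

namespace Finset

variable {α : Type*} [DecidableEq α]

theorem card_le_card_filter_powersetCard_add (p : Finset α → Prop) [DecidablePred p] {t : ℕ}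
    (ht : 1 ≤ t) (s : Finset α) :
    #s ≤ #{S ∈ s.powersetCard t | p S} + (t - 1)
      + #{u ∈ s | ∃ S ∈ s.powersetCard t, u ∈ S ∧ ¬ p S} := by
  set B := {u ∈ s | ∃ S ∈ s.powersetCard t, u ∈ S ∧ ¬ p S}
  suffices #(s \ B) ≤ #{S ∈ s.powersetCard t | p S} + (t - 1) by
    have : #s ≤ #(s \ B) + #B := card_le_card_sdiff_add_card
    omega
  rcases le_or_gt #(s \ B) (t - 1) with h | h
  · omega
  obtain ⟨T, hT, hTcard⟩ := exists_subset_card_eq h.le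
  have hmaps : Set.MapsTo (insert · T) ↑((s \ B) \ T) ↑{S ∈ s.powersetCard t | p S} := by
    intro u hu
    obtain ⟨⟨hus, huB⟩, huT⟩ : (u ∈ s ∧ u ∉ B) ∧ u ∉ T := by simpa using hu
    have hsub : insert u T ⊆ s := insert_subset hus (hT.trans sdiff_subset)
    have hcard : #(insert u T) = t := by rw [card_insert_of_notMem huT, hTcard]; omega
    have hmem : insert u T ∈ s.powersetCard t := mem_powersetCard.2 ⟨hsub, hcard⟩
    refine mem_coe.2 (mem_filter.2 ⟨hmem, ?_⟩)
    by_contra hbad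
    exact huB (mem_filter.2 ⟨hus, _, hmem, mem_insert_self u T, hbad⟩)
  have hinj : Set.InjOn (insert · T) ↑((s \ B) \ T) := fun a ha _ _ hab =>
    (insert_inj (mem_sdiff.1 ha).2).1 hab
  have hgood := card_le_card_of_injOn _ hmaps hinj
  have hT' := card_sdiff_add_card_eq_card hT
  omega

theorem card_le_card_biUnion_of_card_eq {ι : Type*} {s : Finset ι} {A : ι → Finset α} {k : ℕ}
    (hA : ∀ i ∈ s, #(A i) = k) (hs : #s ≤ k + 1) (hfib : ∀ i ∈ s, #{j ∈ s | A j = A i} ≤ k) :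
    #s ≤ #(s.biUnion A) := by
  rcases s.eq_empty_or_nonempty with rfl | ⟨i, hi⟩
  · simp
  by_cases hall : ∀ j ∈ s, A j = A i
  · calc #s = #{j ∈ s | A j = A i} := by rw [filter_true_of_mem hall]
      _ ≤ #(A i) := (hfib i hi).trans (hA i hi).ge
      _ ≤ #(s.biUnion A) := card_le_card (subset_biUnion_of_mem A hi)
  push Not at hall
  obtain ⟨j, hj, hji⟩ := hall
  obtain ⟨z, hzj, hzi⟩ : ∃ z ∈ A j, z ∉ A i := not_subset.1 fun h =>
    hji (eq_of_subset_of_card_le h (by rw [hA i hi, hA j hj]))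
  have hsub : insert z (A i) ⊆ s.biUnion A :=
    insert_subset (mem_biUnion.2 ⟨j, hj, hzj⟩) (subset_biUnion_of_mem A hi)
  have := card_le_card hsub
  rw [card_insert_of_notMem hzi, hA i hi] at this
  omega

end Finset

section AvoidingSDR

variable {α : Type*}

def IsAvoidingSDR (A : α → Finset α) (Z : Finset α) (f : α → α) : Prop :=
  (∀ y ∈ Z, f y ∈ A y) ∧ Set.InjOn f Z ∧ ∀ y ∈ Z, f y ∉ Z

namespace IsAvoidingSDR

variable {A : α → Finset α} {Z : Finset α} {f : α → α}

theorem mono {Z' : Finset α} (h : IsAvoidingSDR A Z f) (hZ : Z' ⊆ Z) : IsAvoidingSDR A Z' f :=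
  ⟨fun y hy => h.1 y (hZ hy), h.2.1.mono (by simpa using hZ),
    fun y hy hfy => h.2.2 y (hZ hy) (hZ hfy)⟩

variable [DecidableEq α]

theorem insert (h : IsAvoidingSDR A Z f) {y a : α} (hyZ : y ∉ Z) (hyf : y ∉ Z.image f)
    (ha : a ∈ A y) (haZ : a ∉ Z) (haf : a ∉ Z.image f) (hay : a ≠ y) :
    IsAvoidingSDR A (insert y Z) (Function.update f y a) := by
  have hupd : Set.EqOn (Function.update f y a) f Z := fun z hz =>
    Function.update_of_ne (by rintro rfl; exact hyZ hz) _ _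
  refine ⟨?_, ?_, ?_⟩
  · intro z hz
    rcases mem_insert.1 hz with rfl | hz
    · simpa using ha
    · rw [hupd hz]; exact h.1 z hz
  · rw [coe_insert, Set.injOn_insert (by simpa using hyZ), hupd.injOn_iff, hupd.image_eq,
      Function.update_self]
    exact ⟨h.2.1, by simpa using haf⟩
  · intro z hz
    rcases mem_insert.1 hz with rfl | hz
    · simpa [hay] using haZ
    · rw [hupd hz, mem_insert, not_or]
      exact ⟨fun hfz => hyf (hfz ▸ mem_image_of_mem f hz), h.2.2 z hz⟩

end IsAvoidingSDR

variable [DecidableEq α]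

theorem exists_isAvoidingSDR_of_disjoint {A : α → Finset α} {Z U : Finset α} {k : ℕ}
    (hA : ∀ y ∈ Z, #(A y) = k) (hZ : #Z ≤ k + 1) (hfib : ∀ y ∈ Z, #{z ∈ Z | A z = A y} ≤ k)
    (hAU : ∀ y ∈ Z, A y ⊆ U) (hZU : Disjoint Z U) : ∃ f, IsAvoidingSDR A Z f := by
  have hall : ∀ I : Finset Z, #I ≤ #(I.biUnion fun y => A y) := by
    intro I
    refine card_le_card_biUnion_of_card_eq (fun i _ => hA i i.2) ?_ fun i _ => ?_
    · exact (card_le_univ I).trans (by simpa using hZ)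
    · refine le_trans ?_ (hfib i i.2)
      refine card_le_card_of_injOn Subtype.val (fun j hj => ?_) Subtype.val_injective.injOn
      simp only [coe_filter, Set.mem_ofPred_eq] at hj
      simpa using hj.2
  obtain ⟨g, hg, hgA⟩ := (all_card_le_biUnion_card_iff_exists_injective _).1 hall
  let f : α → α := fun y => if hy : y ∈ Z then g ⟨y, hy⟩ else y
  have hf : ∀ y (hy : y ∈ Z), f y = g ⟨y, hy⟩ := fun y hy => dif_pos hy
  refine ⟨f, fun y hy => hf y hy ▸ hgA _, fun y₁ hy₁ y₂ hy₂ h => ?_, fun y hy hfy => ?_⟩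
  · rw [hf y₁ hy₁, hf y₂ hy₂] at h
    exact congrArg Subtype.val (hg h)
  · exact disjoint_left.1 hZU hfy (hAU y hy (hf y hy ▸ hgA _))

/-- If a maximal avoiding system `Z₀` is small, then every `A y` with `y` outside the at most
`2k` elements it uses lies inside them; Hall's theorem then applies to `k + 1` such `y`. -/
theorem exists_isAvoidingSDR {A : α → Finset α} {Y : Finset α} {k : ℕ}
    (hA : ∀ y ∈ Y, #(A y) = k) (hself : ∀ y ∈ Y, y ∉ A y)
    (hfib : ∀ y ∈ Y, #{z ∈ Y | A z = A y} ≤ k) (hY : 3 * k + 1 ≤ #Y) :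
    ∃ Z ⊆ Y, #Z = k + 1 ∧ ∃ f, IsAvoidingSDR A Z f := by
  classical
  obtain ⟨Z₀, hZ₀, hmax⟩ := exists_max_image {Z ∈ Y.powerset | ∃ f, IsAvoidingSDR A Z f} card
    ⟨∅, mem_filter.2 ⟨empty_mem_powerset Y, id, by simp [IsAvoidingSDR]⟩⟩
  obtain ⟨hZ₀Y, f₀, hf₀⟩ : Z₀ ⊆ Y ∧ ∃ f, IsAvoidingSDR A Z₀ f := by simpa using hZ₀
  rcases le_or_gt (k + 1) #Z₀ with hbig | hsmall
  · obtain ⟨Z, hZ, hZcard⟩ := exists_subset_card_eq hbig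
    exact ⟨Z, hZ.trans hZ₀Y, hZcard, f₀, hf₀.mono hZ⟩
  set U := Z₀ ∪ Z₀.image f₀
  have hU : #U ≤ 2 * k := by
    have : #U ≤ #Z₀ + #(Z₀.image f₀) := card_union_le _ _
    have := card_image_le (s := Z₀) (f := f₀)
    omega
  have hsat : ∀ y ∈ Y \ U, A y ⊆ U := by
    intro y hy a ha
    by_contra haU
    obtain ⟨hyY, hyU⟩ := mem_sdiff.1 hy
    simp only [U, mem_union, not_or] at hyU haU
    have hext := hf₀.insert hyU.1 hyU.2 ha haU.1 haU.2 (fun h => hself y hyY (h ▸ ha))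
    have := hmax (insert y Z₀) (mem_filter.2 ⟨mem_powerset.2 (insert_subset hyY hZ₀Y), _, hext⟩)
    rw [card_insert_of_notMem hyU.1] at this
    omega
  obtain ⟨Z, hZ, hZcard⟩ := exists_subset_card_eq (show k + 1 ≤ #(Y \ U) by
    have := le_card_sdiff U Y; omega)
  have hZY : Z ⊆ Y := hZ.trans sdiff_subset
  refine ⟨Z, hZY, hZcard, exists_isAvoidingSDR_of_disjoint (fun y hy => hA y (hZY hy)) hZcard.le
    (fun y hy => (card_le_card (filter_subset_filter _ hZY)).trans (hfib y (hZY hy)))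
    (fun y hy => hsat y (hZ hy)) ?_⟩
  exact disjoint_left.2 fun y hy => (mem_sdiff.1 (hZ hy)).2

end AvoidingSDR

namespace SimpleGraph

variable {V : Type*} (G : SimpleGraph V)

theorem containsCopy_Bgraph {t : ℕ} {x u : V} (hxu : G.Adj x u) {a b : Fin t → V}
    (ha : Function.Injective a) (hb : Function.Injective b) (hab : ∀ i j, a i ≠ b j)
    (hau : ∀ j, a j ≠ u) (hbx : ∀ j, b j ≠ x)
    (hxa : ∀ j, G.Adj x (a j)) (hub : ∀ j, G.Adj u (b j)) (hadj : ∀ j, G.Adj (a j) (b j)) :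
    ContainsCopy (Bgraph t) G := by
  have hxu_ne := hxu.ne
  have hxa_ne := fun j => (hxa j).ne
  have hub_ne := fun j => (hub j).ne
  refine ⟨fun | (i, .inl _) => ![x, u] i | (i, .inr j) => ![a j, b j] i, ?_, ?_⟩
  · rintro ⟨i, w | w⟩ ⟨i', w' | w'⟩ h <;> fin_cases i <;> fin_cases i' <;>
      simp_all [Fin.fin_one_eq_zero, ha.eq_iff, hb.eq_iff, eq_comm]
  · rintro ⟨i, w | w⟩ ⟨i', w' | w'⟩ h <;> rw [Bgraph, boxProd_adj] at h <;>
      fin_cases i <;> fin_cases i' <;> simp_all [G.adj_comm]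

theorem containsCopy_Bgraph_of_finset {t : ℕ} {x u : V} (hxu : G.Adj x u) {Z : Finset V}
    (hZ : #Z = t) {f : V → V} (hf : Set.InjOn f Z) (hfZ : ∀ y ∈ Z, f y ∉ Z)
    (hfu : ∀ y ∈ Z, f y ≠ u) (hZx : ∀ y ∈ Z, y ≠ x) (hxf : ∀ y ∈ Z, G.Adj x (f y))
    (huZ : ∀ y ∈ Z, G.Adj u y) (hfZadj : ∀ y ∈ Z, G.Adj (f y) y) :
    ContainsCopy (Bgraph t) G := by
  let b : Fin t → V := fun j => (Z.equivFinOfCardEq hZ).symm j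
  have hbZ : ∀ j, b j ∈ Z := fun j => coe_mem _
  have hb : b.Injective := Subtype.val_injective.comp (Equiv.injective _)
  exact G.containsCopy_Bgraph hxu (a := fun j => f (b j)) (fun i j h => hb (hf (hbZ i) (hbZ j) h))
    hb (fun i j h => hfZ _ (hbZ i) (h ▸ hbZ j)) (fun j => hfu _ (hbZ j)) (fun j => hZx _ (hbZ j))
    (fun j => hxf _ (hbZ j)) (fun j => huZ _ (hbZ j)) (fun j => hfZadj _ (hbZ j))

variable [Fintype V] [DecidableEq V] [DecidableRel G.Adj]

def commonNeighborFinset (S : Finset V) : Finset V := {v | ∀ u ∈ S, G.Adj u v}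

def IsGood (S : Finset V) : Prop := #S + 1 ≤ #(G.commonNeighborFinset S)

instance : DecidablePred G.IsGood := fun _ => Nat.decLe _ _

def badVertices (t : ℕ) (x y : V) : Finset V :=
  {u ∈ G.commonNeighborFinset {x, y} |
    ∃ S ∈ (G.commonNeighborFinset {x, y}).powersetCard t, u ∈ S ∧ ¬ G.IsGood S}

variable {G}

@[simp]
theorem mem_commonNeighborFinset {S : Finset V} {v : V} :
    v ∈ G.commonNeighborFinset S ↔ ∀ u ∈ S, G.Adj u v := by
  simp [commonNeighborFinset]

theorem codeg_eq_card_commonNeighborFinset (S : Finset V) :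
    codeg G S = #(G.commonNeighborFinset S) := by
  rw [codeg, ← Set.ncard_coe_finset]
  congr 1
  ext v
  simp

theorem isGood_iff_codeg {S : Finset V} : G.IsGood S ↔ #S + 1 ≤ codeg G S := by
  rw [IsGood, codeg_eq_card_commonNeighborFinset]

theorem subset_commonNeighborFinset_comm {S T : Finset V} :
    S ⊆ G.commonNeighborFinset T ↔ T ⊆ G.commonNeighborFinset S := by
  simp only [subset_iff, mem_commonNeighborFinset]
  exact ⟨fun h u hu v hv => (h hv u hu).symm, fun h u hu v hv => (h hv u hu).symm⟩

theorem commonNeighborFinset_singleton (x : V) :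
    G.commonNeighborFinset {x} = G.neighborFinset x := by
  ext v
  simp

theorem sum_degree_sq_eq_sum_card_commonNeighborFinset :
    ∑ v, G.degree v ^ 2 = ∑ x, ∑ y, #(G.commonNeighborFinset {x, y}) := by
  have hdeg : ∀ v, G.degree v = ∑ x, if G.Adj x v then 1 else 0 := fun v => by
    rw [← card_filter, ← card_neighborFinset_eq_degree]
    congr 1
    ext
    simp [adj_comm]
  have hcommon : ∀ x y, #(G.commonNeighborFinset {x, y})
      = ∑ v, (if G.Adj x v then 1 else 0) * (if G.Adj y v then 1 else 0) := fun x y => by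
    rw [commonNeighborFinset, card_filter]
    simp only [mem_insert, mem_singleton, forall_eq_or_imp, forall_eq, ite_zero_mul_ite_zero,
      mul_one]
  simp_rw [sq, hdeg, sum_mul_sum, hcommon]
  rw [sum_comm]
  exact sum_congr rfl fun _ _ => sum_comm

theorem sum_sum_card_filter_isGood_eq (t : ℕ) :
    ∑ x, ∑ y ∈ univ.erase x, #{S ∈ (G.commonNeighborFinset {x, y}).powersetCard t | G.IsGood S}
      = ∑ S with #S = t ∧ G.IsGood S,
          #(G.commonNeighborFinset S) * (#(G.commonNeighborFinset S) - 1) := by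
  rw [← sum_finset_product univ.offDiag univ (fun x => univ.erase x) (by simp [and_comm, ne_comm])
    (f := fun p => #{S ∈ (G.commonNeighborFinset {p.1, p.2}).powersetCard t | G.IsGood S})]
  calc ∑ p ∈ univ.offDiag, #{S ∈ (G.commonNeighborFinset {p.1, p.2}).powersetCard t | G.IsGood S}
      = ∑ p ∈ univ.offDiag,
          ∑ _S ∈ {S ∈ (G.commonNeighborFinset {p.1, p.2}).powersetCard t | G.IsGood S}, 1 :=
        sum_congr rfl fun p _ => card_eq_sum_ones _
    _ = ∑ S with #S = t ∧ G.IsGood S, ∑ _p ∈ (G.commonNeighborFinset S).offDiag, 1 := by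
        refine sum_comm' fun p S => ?_
        simp only [mem_offDiag, mem_filter, mem_powersetCard, mem_univ, true_and,
          subset_commonNeighborFinset_comm, insert_subset_iff, singleton_subset_iff]
        tauto
    _ = _ := sum_congr rfl fun S _ => by rw [← card_eq_sum_ones, offDiag_card, Nat.mul_sub_one]

/-- Choosing bad `t`-sets `S y ∋ u` of common neighbours of `x` and `y`, the sets `S y \ {u}`
admit an avoiding system of `t` representatives `f y`, and then the four-cycles `x u y (f y)` form
a copy of `B_t`. No `t` of the `S y` coincide: a common value `S` has all these `y` and `x` in
`N(S)`, which has at most `t` elements. -/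
theorem card_filter_mem_badVertices_le {t : ℕ} (hfree : ¬ ContainsCopy (Bgraph t) G) {x u : V}
    (hxu : G.Adj x u) : #{y ∈ univ.erase x | u ∈ G.badVertices t x y} ≤ 3 * (t - 1) := by
  set Y := {y ∈ univ.erase x | u ∈ G.badVertices t x y}
  by_contra! hY
  have hbad : ∀ y ∈ Y, ∃ S ⊆ G.commonNeighborFinset {x, y},
      #S = t ∧ u ∈ S ∧ #(G.commonNeighborFinset S) ≤ t := by
    intro y hy
    obtain ⟨-, -, S, ⟨hSsub, hScard⟩, huS, hSbad⟩ := by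
      simpa [Y, badVertices, IsGood] using hy
    exact ⟨S, hSsub, hScard, huS, by omega⟩
  choose! S hSsub hScard huS hSbad using hbad
  have hSadj : ∀ y ∈ Y, ∀ s ∈ S y, G.Adj x s ∧ G.Adj y s := fun y hy s hs => by
    simpa using hSsub y hy hs
  have hYx : ∀ y ∈ Y, y ≠ x := fun y hy => (mem_erase.1 (mem_filter.1 hy).1).1
  have ht : 1 ≤ t := by
    obtain ⟨y, hy⟩ := card_pos.1 (show 0 < #Y by omega)
    exact hScard y hy ▸ card_pos.2 ⟨u, huS y hy⟩
  have hfib : ∀ y ∈ Y, #{z ∈ Y | (S z).erase u = (S y).erase u} ≤ t - 1 := by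
    intro y hy
    have hxS : x ∈ G.commonNeighborFinset (S y) := by
      simpa using fun s hs => (hSadj y hy s hs).1.symm
    calc #{z ∈ Y | (S z).erase u = (S y).erase u}
        ≤ #((G.commonNeighborFinset (S y)).erase x) := card_le_card fun z hz => by
          obtain ⟨hzY, hSz⟩ := mem_filter.1 hz
          have : S z = S y := by rw [← insert_erase (huS z hzY), hSz, insert_erase (huS y hy)]
          simpa [← this, hYx z hzY] using fun s hs => (hSadj z hzY s hs).2.symm
      _ ≤ t - 1 := by rw [card_erase_of_mem hxS]; have := hSbad y hy; omega
  obtain ⟨Z, hZY, hZcard, f, hfA, hfinj, hfZ⟩ := exists_isAvoidingSDR (k := t - 1)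
    (fun y hy => by rw [card_erase_of_mem (huS y hy), hScard y hy])
    (fun y hy hyS => G.irrefl (hSadj y hy y (mem_of_mem_erase hyS)).2) hfib (by omega)
  have hSZ : ∀ y ∈ Z, ∀ s ∈ S y, G.Adj x s ∧ G.Adj y s := fun y hy => hSadj y (hZY hy)
  exact hfree (G.containsCopy_Bgraph_of_finset hxu (by omega) hfinj hfZ
    (fun y hy => (mem_erase.1 (hfA y hy)).1) (fun y hy => hYx y (hZY hy))
    (fun y hy => (hSZ y hy _ (mem_of_mem_erase (hfA y hy))).1)
    (fun y hy => (hSZ y hy u (huS y (hZY hy))).2.symm)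
    (fun y hy => (hSZ y hy _ (mem_of_mem_erase (hfA y hy))).2.symm))

theorem sum_card_badVertices_le {t : ℕ} (hfree : ¬ ContainsCopy (Bgraph t) G) (x : V) :
    ∑ y ∈ univ.erase x, #(G.badVertices t x y) ≤ 3 * (t - 1) * G.degree x := by
  have hadj : ∀ y u, u ∈ G.badVertices t x y → G.Adj x u := fun y u hu => by
    simp only [badVertices, mem_filter, mem_commonNeighborFinset] at hu
    exact hu.1 x (mem_insert_self x {y})
  calc ∑ y ∈ univ.erase x, #(G.badVertices t x y)
      = ∑ u ∈ G.neighborFinset x, #{y ∈ univ.erase x | u ∈ G.badVertices t x y} := by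
        simp only [card_eq_sum_ones]
        refine sum_comm' fun y u => ?_
        simp only [mem_filter, mem_neighborFinset]
        exact ⟨fun h => ⟨h, hadj y u h.2⟩, fun h => h.1⟩
    _ ≤ ∑ _u ∈ G.neighborFinset x, 3 * (t - 1) := sum_le_sum fun u hu =>
        card_filter_mem_badVertices_le hfree ((mem_neighborFinset _ _ _).1 hu)
    _ = 3 * (t - 1) * G.degree x := by
        rw [sum_const, card_neighborFinset_eq_degree, smul_eq_mul, mul_comm]

theorem sum_card_commonNeighborFinset_le {t : ℕ} (ht : 1 ≤ t)
    (hfree : ¬ ContainsCopy (Bgraph t) G) (x : V) :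
    ∑ y, #(G.commonNeighborFinset {x, y})
      ≤ ∑ y ∈ univ.erase x, #{S ∈ (G.commonNeighborFinset {x, y}).powersetCard t | G.IsGood S}
        + (t - 1) * Fintype.card V + (3 * (t - 1) + 1) * G.degree x := by
  rw [← add_sum_erase _ _ (mem_univ x), pair_eq_singleton, commonNeighborFinset_singleton,
    card_neighborFinset_eq_degree]
  have hbad := sum_card_badVertices_le hfree x
  have hcard : (t - 1) * #(univ.erase x) ≤ (t - 1) * Fintype.card V :=
    Nat.mul_le_mul_left _ ((card_erase_le).trans (card_univ).le)
  calc G.degree x + ∑ y ∈ univ.erase x, #(G.commonNeighborFinset {x, y})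
      ≤ G.degree x + ∑ y ∈ univ.erase x, (#{S ∈ (G.commonNeighborFinset {x, y}).powersetCard t |
          G.IsGood S} + (t - 1) + #(G.badVertices t x y)) := by
        gcongr with y
        exact card_le_card_filter_powersetCard_add G.IsGood ht _
    _ ≤ _ := by
        rw [sum_add_distrib, sum_add_distrib, sum_const, smul_eq_mul, add_one_mul]
        linarith [mul_comm (t - 1) #(univ.erase x)]

theorem sum_degree_sq_le {t : ℕ} (ht : 1 ≤ t) (hfree : ¬ ContainsCopy (Bgraph t) G) :
    ∑ v, G.degree v ^ 2
      ≤ ∑ S with #S = t ∧ G.IsGood S,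
          #(G.commonNeighborFinset S) * (#(G.commonNeighborFinset S) - 1)
        + (t - 1) * Fintype.card V ^ 2 + 2 * (3 * (t - 1) + 1) * #G.edgeFinset := by
  rw [sum_degree_sq_eq_sum_card_commonNeighborFinset, ← sum_sum_card_filter_isGood_eq]
  calc ∑ x, ∑ y, #(G.commonNeighborFinset {x, y})
      ≤ ∑ x, (∑ y ∈ univ.erase x,
          #{S ∈ (G.commonNeighborFinset {x, y}).powersetCard t | G.IsGood S}
          + (t - 1) * Fintype.card V + (3 * (t - 1) + 1) * G.degree x) :=
        sum_le_sum fun x _ => sum_card_commonNeighborFinset_le ht hfree x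
    _ = _ := by
        rw [sum_add_distrib, sum_add_distrib, sum_const, card_univ, ← mul_sum, smul_eq_mul,
          sum_degrees_eq_twice_card_edges]
        ring

end SimpleGraph

theorem good_codeg_sum_lower (t n : ℕ) (ht : 1 ≤ t) (G : SimpleGraph (Fin n))
    (hfree : ¬ ContainsCopy (Bgraph t) G) :
    (∑ u : Fin n, ((G.neighborSet u).ncard : ℝ) ^ 2)
        - 2 * (4 * (t : ℝ) - 1) * (G.edgeSet.ncard : ℝ) - ((t : ℝ) - 1) * (n : ℝ) ^ 2
      ≤ ∑ S ∈ Finset.univ.filter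
            (fun S : Finset (Fin n) => S.card = t ∧ S.card + 1 ≤ codeg G S),
          (codeg G S : ℝ) * ((codeg G S : ℝ) - 1) := by
  classical
  have hdeg (u : Fin n) : (G.neighborSet u).ncard = G.degree u := by
    rw [← card_neighborFinset_eq_degree, ← Set.ncard_coe_finset, coe_neighborFinset]
  have hedge : G.edgeSet.ncard = #G.edgeFinset := by rw [← Set.ncard_coe_finset, coe_edgeFinset]
  have hgood : ∑ S with #S = t ∧ G.IsGood S, (codeg G S : ℝ) * ((codeg G S : ℝ) - 1)
      = ∑ S with #S = t ∧ G.IsGood S,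
          ((#(G.commonNeighborFinset S) * (#(G.commonNeighborFinset S) - 1) : ℕ) : ℝ) := by
    refine sum_congr rfl fun S hS => ?_
    have : 1 ≤ #(G.commonNeighborFinset S) := by simp [IsGood] at hS; omega
    push_cast [this, codeg_eq_card_commonNeighborFinset]
    ring
  have hmain := (Nat.cast_le (α := ℝ)).2 (G.sum_degree_sq_le ht hfree)
  push_cast [Nat.cast_sub ht] at hmain
  simp only [← isGood_iff_codeg]
  rw [hgood]
  simp only [hdeg, hedge, Fintype.card_fin] at hmain ⊢
  push_cast
  nlinarith [mul_nonneg (Nat.cast_nonneg (α := ℝ) t) (Nat.cast_nonneg (α := ℝ) #G.edgeFinset)]
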